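/- For r ≥ 3 and A = e^{2πi/4r}, the full Gauss sum satisfies |Σ_{i=0}^{r−2} Δ(i)² A^{i²+2i}|² = N, where N = Σ_{i=0}^{r−2} Δ(i)² = r/(2sin²(π/r)). Equivalently, the constant κ = (Σ_i Δ(i)² A^{i²+2i})/√N has modulus 1. -/

import Mathlib

/-!
Put `q = A²` and `D = q - q⁻¹ = 2i·sin(π/r)`. Then `Δ(i)² D² = (q^{i+1} - q^{-(i+1)})²`,
so `N D²` and `S D²` (with `S` the Gauss sum of the statement) are sums over `j = 1, …, r-1`
of functions of `j` that are even, `2r`-periodic and vanish at `j = 0` and `j = r`; each is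
therefore half of the sum over a full period. For `N` the full-period sum is a combination of
geometric sums of roots of unity, and `N D² = -2r`. For `S`, expanding the square and shifting
`j ↦ j ± 2` turns the full-period sum into a multiple of the quadratic Gauss sum
`G = ∑_{k mod 2r} A^{k²}`, and `S D = -A⁻³ G`. Finally `|G|² = 2r` by orthogonality of the
characters `k ↦ A^{2kl}`, so `|S|² = 2r / |D|² = N`.
-/

open Complex Finset

namespace Function.Periodic

variable {M : Type*} [AddCommGroup M] {T : ℤ → M}

theorem sum_range_comp_add {n : ℕ} (hT : Periodic T n) (c : ℤ) :
    ∑ k ∈ range n, T (k + c) = ∑ k ∈ range n, T k := by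
  have step : ∀ c : ℤ, ∑ k ∈ range n, T (k + (c + 1)) = ∑ k ∈ range n, T (k + c) := by
    intro c
    have h := sum_range_succ (fun k : ℕ => T (k + c)) n
    rw [sum_range_succ', Nat.cast_zero, zero_add, add_comm (n : ℤ), hT] at h
    simpa [add_assoc, add_comm (1 : ℤ)] using add_right_cancel h
  induction c using Int.induction_on with
  | zero => simp
  | succ c ih => rw [step, ih]
  | pred c ih => rw [← ih, ← step, sub_add_cancel]

theorem sum_range_two_mul_of_even {m : ℕ} (hT : Periodic T (2 * m : ℕ)) (heven : Function.Even T)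
    (hm : 0 < m) :
    ∑ k ∈ range (2 * m), T k = T 0 + T m + 2 • ∑ i ∈ range (m - 1), T (i + 1) := by
  have hreflect : ∑ k ∈ range m, T (m + k : ℕ) = ∑ i ∈ range m, T (i + 1) := by
    rw [← sum_range_reflect]
    refine sum_congr rfl fun i hi => ?_
    have hi : i < m := mem_range.1 hi
    calc T (m + (m - 1 - i) : ℕ) = T ((m + (m - 1 - i) : ℕ) - 2 * m) := (hT.sub_eq _).symm
      _ = T (-(i + 1)) := by congr 1; omega
      _ = T (i + 1) := heven _
  have hlast : ((m - 1 : ℕ) : ℤ) + 1 = m := by omega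
  rw [two_mul, sum_range_add, hreflect, ← Nat.sub_add_cancel hm, sum_range_succ', sum_range_succ,
    Nat.sub_add_cancel hm, hlast]
  push_cast
  abel

end Function.Periodic

theorem periodic_zpow_of_pow_eq_one {G₀ : Type*} [GroupWithZero G₀] {ζ : G₀} {n : ℕ}
    (h : ζ ^ n = 1) : Function.Periodic (fun j : ℤ => ζ ^ j) n := by
  rcases eq_or_ne n 0 with rfl | hn
  · simp [Function.Periodic]
  · have hζ : ζ ≠ 0 := by rintro rfl; simp [zero_pow hn] at h
    intro j
    simp [zpow_add₀ hζ, h]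

section RootsOfUnity

variable {K : Type*} [Field K] {ζ : K} {r : ℕ}

theorem periodic_sq_zpow_sub_zpow_neg {q : K} {n : ℕ} (h : q ^ n = 1) :
    Function.Periodic (fun j : ℤ => (q ^ j - q ^ (-j)) ^ 2) n := by
  have hp := periodic_zpow_of_pow_eq_one h
  intro j
  have h₁ : q ^ (j + n) = q ^ j := hp j
  have h₂ : q ^ (-j - n) = q ^ (-j) := hp.sub_eq (-j)
  dsimp only
  rw [neg_add', h₁, h₂]

theorem sq_zpow_sub_zpow_neg_eq_zero {q : K} (h : q ^ (2 * r) = 1) :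
    (q ^ (r : ℤ) - q ^ (-(r : ℤ))) ^ 2 = 0 := by
  have e : -(r : ℤ) = r - (2 * r : ℕ) := by push_cast; ring
  rw [e, (periodic_zpow_of_pow_eq_one h).sub_eq, sub_self, zero_pow two_ne_zero]

theorem periodic_zpow_sq (h : ζ ^ (4 * r) = 1) :
    Function.Periodic (fun j : ℤ => ζ ^ (j ^ 2)) (2 * r : ℕ) := by
  intro j
  have e : (j + (2 * r : ℕ)) ^ 2 = j ^ 2 + (j + r) * (4 * r : ℕ) := by push_cast; ring
  exact (congrArg (ζ ^ ·) e).trans ((periodic_zpow_of_pow_eq_one h).int_mul (j + r) (j ^ 2))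

def quadraticGaussSum (ζ : K) (n : ℕ) : K := ∑ k ∈ range n, ζ ^ ((k : ℤ) ^ 2)

namespace IsPrimitiveRoot

theorem sum_range_sq_zpow_sub_zpow_neg [NeZero (2 : K)] {q : K} (hq : IsPrimitiveRoot q (2 * r))
    (hr : 1 < r) :
    ∑ i ∈ range (r - 1), (q ^ ((i : ℤ) + 1) - q ^ (-((i : ℤ) + 1))) ^ 2 = -(2 * r) := by
  set W : ℤ → K := fun j => (q ^ j - q ^ (-j)) ^ 2 with hW
  have hperiodic : Function.Periodic W (2 * r : ℕ) := periodic_sq_zpow_sub_zpow_neg hq.pow_eq_one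
  have heven : Function.Even W := fun j => by simp only [hW, neg_neg]; ring
  have hexpand : ∀ k : ℕ, W k = (q ^ 2) ^ k + (q⁻¹ ^ 2) ^ k - 2 := by
    intro k
    have hprod : q ^ k * q⁻¹ ^ k = 1 := by
      rw [← mul_pow, mul_inv_cancel₀ (hq.ne_zero (by omega)), one_pow]
    simp only [hW, zpow_neg, zpow_natCast, ← inv_pow]
    linear_combination (-2) * hprod
  have hgeom : ∀ {w : K}, IsPrimitiveRoot w (2 * r) → ∑ k ∈ range (2 * r), (w ^ 2) ^ k = 0 := by
    intro w hw
    have hne : w ^ 2 ≠ 1 := hw.pow_ne_one_of_pos_of_lt two_ne_zero (by omega)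
    rw [geom_sum_eq hne, ← pow_mul, mul_comm, pow_mul, hw.pow_eq_one, one_pow, sub_self, zero_div]
  have hfull : ∑ k ∈ range (2 * r), W k = 2 * -(2 * r) := by
    simp only [hexpand, sum_sub_distrib, sum_add_distrib, hgeom hq, hgeom hq.inv, sum_const,
      card_range, nsmul_eq_mul]
    push_cast
    ring
  have hW0 : W 0 = 0 := by simp [hW]
  have hWr : W r = 0 := sq_zpow_sub_zpow_neg_eq_zero hq.pow_eq_one
  rw [hperiodic.sum_range_two_mul_of_even heven (by omega), hW0, hWr, zero_add, zero_add,
    two_nsmul, ← two_mul] at hfull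
  exact mul_left_cancel₀ two_ne_zero hfull

variable (hζ : IsPrimitiveRoot ζ (4 * r))
include hζ

theorem sum_range_pow_two_mul_pow {x : ℕ} (hx : x < 2 * r) :
    ∑ y ∈ range (2 * r), (ζ ^ (2 * x)) ^ y = if x = 0 then (2 * r : K) else 0 := by
  split_ifs with h0
  · simp [h0]
  · have hne : ζ ^ (2 * x) ≠ 1 := hζ.pow_ne_one_of_pos_of_lt (by omega) (by omega)
    have hpow : (ζ ^ (2 * x)) ^ (2 * r) = 1 := by
      rw [← pow_mul, show 2 * x * (2 * r) = 4 * r * x by ring, pow_mul, hζ.pow_eq_one, one_pow]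
    rw [geom_sum_eq hne, hpow, sub_self, zero_div]

theorem quadraticGaussSum_mul_sum_zpow_neg_sq :
    quadraticGaussSum ζ (2 * r) * ∑ k ∈ range (2 * r), ζ ^ (-(k : ℤ) ^ 2) = 2 * r := by
  rcases Nat.eq_zero_or_pos r with rfl | hr
  · simp [quadraticGaussSum]
  have hζ0 : ζ ≠ 0 := hζ.ne_zero (by omega)
  have hsq := periodic_zpow_sq hζ.pow_eq_one
  have hexpand : ∀ x y : ℕ, ζ ^ (((x : ℤ) + y) ^ 2) * ζ ^ (-(y : ℤ) ^ 2)
      = ζ ^ ((x : ℤ) ^ 2) * (ζ ^ (2 * x)) ^ y := by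
    intro x y
    rw [← pow_mul, ← zpow_natCast ζ (2 * x * y), ← zpow_add₀ hζ0, ← zpow_add₀ hζ0]
    congr 1
    push_cast
    ring
  calc quadraticGaussSum ζ (2 * r) * ∑ k ∈ range (2 * r), ζ ^ (-(k : ℤ) ^ 2)
      = ∑ y ∈ range (2 * r), ∑ x ∈ range (2 * r), ζ ^ ((x : ℤ) ^ 2) * ζ ^ (-(y : ℤ) ^ 2) := by
        rw [quadraticGaussSum, sum_mul_sum, sum_comm]
    _ = ∑ y ∈ range (2 * r), ∑ x ∈ range (2 * r),
          ζ ^ (((x : ℤ) + y) ^ 2) * ζ ^ (-(y : ℤ) ^ 2) := by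
        refine sum_congr rfl fun y _ => ?_
        have hperiodic : Function.Periodic (fun x : ℤ => ζ ^ (x ^ 2) * ζ ^ (-(y : ℤ) ^ 2))
            (2 * r : ℕ) := fun x => congrArg (· * _) (hsq x)
        exact (hperiodic.sum_range_comp_add y).symm
    _ = ∑ x ∈ range (2 * r), ζ ^ ((x : ℤ) ^ 2) * ∑ y ∈ range (2 * r), (ζ ^ (2 * x)) ^ y := by
        simp only [hexpand, mul_sum]
        exact sum_comm
    _ = ∑ x ∈ range (2 * r), ζ ^ ((x : ℤ) ^ 2) * if x = 0 then (2 * r : K) else 0 :=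
        sum_congr rfl fun x hx => by rw [hζ.sum_range_pow_two_mul_pow (mem_range.1 hx)]
    _ = 2 * r := by simp [hr]

theorem sum_range_sq_zpow_sub_zpow_neg_mul_pow [NeZero (2 : K)] (hr : 0 < r) :
    ∑ i ∈ range (r - 1), ((ζ ^ 2) ^ ((i : ℤ) + 1) - (ζ ^ 2) ^ (-((i : ℤ) + 1))) ^ 2 *
      ζ ^ (i ^ 2 + 2 * i) = -(ζ ^ 3)⁻¹ * (ζ ^ 2 - (ζ ^ 2)⁻¹) * quadraticGaussSum ζ (2 * r) := by
  have hζ0 : ζ ≠ 0 := hζ.ne_zero (by omega)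
  have hq : (ζ ^ 2) ^ (2 * r) = 1 := by rw [← pow_mul, ← hζ.pow_eq_one]; ring_nf
  set T : ℤ → K := fun j => ((ζ ^ 2) ^ j - (ζ ^ 2) ^ (-j)) ^ 2 * ζ ^ (j ^ 2) with hT
  have hperiodic : Function.Periodic T (2 * r : ℕ) :=
    (periodic_sq_zpow_sub_zpow_neg hq).mul (periodic_zpow_sq hζ.pow_eq_one)
  have heven : Function.Even T := fun j => by simp only [hT, neg_neg, even_two.neg_pow]; ring
  have hexpand : ∀ j : ℤ, T j = ζ ^ (-4 : ℤ) * ζ ^ ((j + 2) ^ 2) - 2 * ζ ^ (j ^ 2)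
      + ζ ^ (-4 : ℤ) * ζ ^ ((j + -2) ^ 2) := by
    intro j
    have hsq : ∀ m : ℤ, (ζ ^ 2) ^ m = ζ ^ (2 * m) := fun m => by
      rw [← zpow_natCast, ← zpow_mul, Nat.cast_ofNat]
    have h₁ : ζ ^ (-4 : ℤ) * ζ ^ ((j + 2) ^ 2) = ζ ^ (2 * j) * ζ ^ (2 * j) * ζ ^ (j ^ 2) := by
      simp only [← zpow_add₀ hζ0]; ring_nf
    have h₂ : ζ ^ (2 * j) * ζ ^ (-(2 * j)) = 1 := by rw [← zpow_add₀ hζ0, add_neg_cancel, zpow_zero]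
    have h₃ : ζ ^ (-4 : ℤ) * ζ ^ ((j + -2) ^ 2)
        = ζ ^ (-(2 * j)) * ζ ^ (-(2 * j)) * ζ ^ (j ^ 2) := by
      simp only [← zpow_add₀ hζ0]; ring_nf
    rw [h₁, h₃]
    simp only [hT, hsq, mul_neg]
    linear_combination (-2 * ζ ^ (j ^ 2)) * h₂
  have hfull :
      ∑ k ∈ range (2 * r), T k = 2 * ((ζ ^ (-4 : ℤ) - 1) * quadraticGaussSum ζ (2 * r)) := by
    simp only [hexpand, sum_add_distrib, sum_sub_distrib, ← mul_sum]
    rw [(periodic_zpow_sq hζ.pow_eq_one).sum_range_comp_add 2,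
      (periodic_zpow_sq hζ.pow_eq_one).sum_range_comp_add (-2), quadraticGaussSum]
    ring
  have hT0 : T 0 = 0 := by simp [hT]
  have hTr : T r = 0 := by simp only [hT, sq_zpow_sub_zpow_neg_eq_zero hq, zero_mul]
  rw [hperiodic.sum_range_two_mul_of_even heven hr, hT0, hTr, zero_add, zero_add, two_nsmul,
    ← two_mul] at hfull
  have hshift : ∀ i : ℕ, ζ ^ (i ^ 2 + 2 * i) = ζ⁻¹ * ζ ^ (((i : ℤ) + 1) ^ 2) := fun i => by
    rw [← zpow_natCast, ← zpow_neg_one, ← zpow_add₀ hζ0]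
    push_cast
    ring_nf
  simp only [hshift, mul_left_comm _ ζ⁻¹, ← mul_sum]
  rw [mul_left_cancel₀ two_ne_zero hfull]
  field_simp
  ring

end IsPrimitiveRoot

theorem IsPrimitiveRoot.norm_sq_quadraticGaussSum {ζ : ℂ} {r : ℕ} (hζ : IsPrimitiveRoot ζ (4 * r)) :
    ‖quadraticGaussSum ζ (2 * r)‖ ^ 2 = 2 * r := by
  rcases Nat.eq_zero_or_pos r with rfl | hr
  · simp [quadraticGaussSum]
  have hconj : starRingEnd ℂ (quadraticGaussSum ζ (2 * r))
      = ∑ k ∈ range (2 * r), ζ ^ (-(k : ℤ) ^ 2) := by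
    rw [quadraticGaussSum, map_sum]
    refine sum_congr rfl fun k _ => ?_
    rw [map_zpow₀, ← inv_eq_conj (hζ.norm'_eq_one (by omega)), inv_zpow']
  have h := hζ.quadraticGaussSum_mul_sum_zpow_neg_sq
  rw [← hconj, mul_conj] at h
  rw [Complex.sq_norm]
  exact_mod_cast h

theorem IsPrimitiveRoot.norm_sum_sq_zpow_sub_zpow_neg_mul_pow {ζ : ℂ} {r : ℕ}
    (hζ : IsPrimitiveRoot ζ (4 * r)) (hr : 0 < r) :
    ‖∑ i ∈ range (r - 1), ((ζ ^ 2) ^ ((i : ℤ) + 1) - (ζ ^ 2) ^ (-((i : ℤ) + 1))) ^ 2 *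
      ζ ^ (i ^ 2 + 2 * i)‖ = ‖ζ ^ 2 - (ζ ^ 2)⁻¹‖ * ‖quadraticGaussSum ζ (2 * r)‖ := by
  rw [hζ.sum_range_sq_zpow_sub_zpow_neg_mul_pow hr, norm_mul, norm_mul, norm_neg, norm_inv,
    norm_pow, hζ.norm'_eq_one (by omega), one_pow, inv_one, one_mul]

end RootsOfUnity

theorem Complex.exp_mul_I_sub_inv (x : ℂ) : exp (x * I) - (exp (x * I))⁻¹ = 2 * sin x * I := by
  rw [← exp_neg, two_sin]
  ring_nf
  rw [I_sq]
  ring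

theorem Complex.exp_two_pi_I_div_sq_sub_inv (n : ℕ) :
    exp (2 * Real.pi * I / (4 * n)) ^ 2 - (exp (2 * Real.pi * I / (4 * n)) ^ 2)⁻¹
      = 2 * Real.sin (Real.pi / n) * I := by
  have h : exp (2 * Real.pi * I / (4 * n)) ^ 2 = exp ((Real.pi / n : ℂ) * I) := by
    rw [← exp_nat_mul]
    ring_nf
  rw [h, exp_mul_I_sub_inv, ofReal_sin]
  push_cast
  ring

/-- For r ≥ 3 and A = exp(2πi/4r), q = A², the full Gauss sum satisfies
|Σ_{i=0}^{r−2} Δ(i)² A^{i²+2i}|² = N where N = Σ Δ(i)² = r/(2 sin²(π/r));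
equivalently κ = (Σ Δ(i)² A^{i²+2i})/√N has modulus 1. -/
theorem full_gauss_sum (r : ℕ) (hr : 3 ≤ r)
    (A : ℂ) (hA : A = Complex.exp (2 * Real.pi * Complex.I / (4 * r)))
    (q : ℂ) (hq : q = A ^ 2)
    (Δ : ℕ → ℂ)
    (hΔ : ∀ i, Δ i = (-1 : ℂ) ^ i * (q ^ ((i : ℤ) + 1) - q ^ (-(i : ℤ) - 1)) / (q - q⁻¹)) :
    ((‖∑ i ∈ Finset.range (r - 1), (Δ i) ^ 2 * A ^ (i ^ 2 + 2 * i)‖ : ℝ) : ℂ) ^ 2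
        = ∑ i ∈ Finset.range (r - 1), (Δ i) ^ 2 ∧
    (∑ i ∈ Finset.range (r - 1), (Δ i) ^ 2)
        = ((r : ℂ) / (2 * (Real.sin (Real.pi / r) : ℂ) ^ 2)) ∧
    ‖(∑ i ∈ Finset.range (r - 1), (Δ i) ^ 2 * A ^ (i ^ 2 + 2 * i))
        / (Real.sqrt ((r : ℝ) / (2 * Real.sin (Real.pi / r) ^ 2)) : ℂ)‖ = 1 := by
  have hA₁ : IsPrimitiveRoot A (4 * r) := by
    rw [hA]
    exact_mod_cast Complex.isPrimitiveRoot_exp (4 * r) (by omega)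
  have hq₁ : IsPrimitiveRoot q (2 * r) := hq ▸ hA₁.pow (by omega) (by ring)
  set S := ∑ i ∈ range (r - 1), Δ i ^ 2 * A ^ (i ^ 2 + 2 * i)
  set s : ℝ := Real.sin (Real.pi / r)
  have hs : 0 < s := Real.sin_pos_of_pos_of_lt_pi (by positivity)
    (div_lt_self Real.pi_pos (by exact_mod_cast (by omega : 1 < r)))
  have hD : q - q⁻¹ = 2 * s * I := hq ▸ hA ▸ Complex.exp_two_pi_I_div_sq_sub_inv r
  have hD0 : q - q⁻¹ ≠ 0 := by rw [hD]; simp [hs.ne']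
  have hΔD : ∀ i : ℕ,
      Δ i ^ 2 * (q - q⁻¹) ^ 2 = (q ^ ((i : ℤ) + 1) - q ^ (-((i : ℤ) + 1))) ^ 2 := fun i => by
    rw [hΔ, div_pow, div_mul_cancel₀ _ (pow_ne_zero 2 hD0), mul_pow, ← pow_mul, pow_mul',
      neg_one_sq, one_pow, one_mul, neg_add']
  have hN : ∑ i ∈ range (r - 1), Δ i ^ 2 = r / (2 * (s : ℂ) ^ 2) := by
    have h := hq₁.sum_range_sq_zpow_sub_zpow_neg (by omega)
    simp_rw [← hΔD, ← sum_mul, hD] at h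
    rw [eq_div_iff (by simp [hs.ne'])]
    linear_combination (-1 / 2 : ℂ) * h + 2 * (s : ℂ) ^ 2 * (∑ i ∈ range (r - 1), Δ i ^ 2) * I_sq
  have hSG : ‖S‖ * (2 * s) = ‖quadraticGaussSum A (2 * r)‖ := by
    have h := hA₁.norm_sum_sq_zpow_sub_zpow_neg_mul_pow (by omega)
    simp_rw [← hq, ← hΔD, mul_right_comm _ _ (A ^ _), ← sum_mul, norm_mul, norm_pow, hD] at h
    simp only [norm_mul, norm_I, Complex.norm_two, norm_real, Real.norm_of_nonneg hs.le] at h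
    rw [← mul_left_inj' (by positivity : 2 * s ≠ 0)]
    linear_combination h
  have hS : ‖S‖ ^ 2 = r / (2 * s ^ 2) := by
    rw [eq_div_iff (by positivity)]
    linear_combination (congrArg (· ^ 2) hSG).trans hA₁.norm_sq_quadraticGaussSum / 2
  refine ⟨by rw [hN]; exact_mod_cast hS, hN, ?_⟩
  rw [norm_div, norm_real, Real.norm_of_nonneg (Real.sqrt_nonneg _), ← hS,
    Real.sqrt_sq (norm_nonneg _), div_self]
  have hr₀ : (0 : ℝ) < r := by exact_mod_cast (by omega : 0 < r)
  exact fun h0 => (div_pos hr₀ (by positivity : (0 : ℝ) < 2 * s ^ 2)).ne' (by rw [← hS, h0]; ring)
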